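/- Let n = 2^(2^ν) + 1 be prime with ν ≥ 2, assume that 2 and 3 together generate the group of units of ZMod n, put ng = 2^(2^ν − (ν+1)) and let ζ = exp(2πi/n). For 1 ≤ k ≤ ng, a positive integer M dividing 2^ν, and 1 ≤ s ≤ M, define G_k(s, M) = Σ_{t=0}^{2^ν/M − 1} (ζ^(e(t)) + ζ^(−e(t))) where e(t) = 3^(k−1) · 2^(s−1) · 2^(M·t). Then for every m with 0 ≤ m and 2^(m+1) ≤ 2^ν, every 1 ≤ k ≤ ng and every 1 ≤ s ≤ 2^m, there exist an integer c and integers μ(j, l) for 1 ≤ j ≤ ng, 1 ≤ l ≤ 2^m such that G_k(s, 2^(m+1)) · G_k(s + 2^m, 2^(m+1)) = c + Σ_{j=1}^{ng} Σ_{l=1}^{2^m} μ(j, l) · G_j(l, 2^m). -/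

import Mathlib

open Finset

noncomputable def Gpart (n ν k s M : ℕ) : ℂ :=
  ∑ t ∈ Finset.range (2 ^ ν / M),
    (Complex.exp (2 * Real.pi * Complex.I / n) ^
        ((3 ^ (k - 1) * 2 ^ (s - 1) * 2 ^ (M * t) : ℕ) : ℤ) +
      Complex.exp (2 * Real.pi * Complex.I / n) ^
        (-((3 ^ (k - 1) * 2 ^ (s - 1) * 2 ^ (M * t) : ℕ) : ℤ)))


noncomputable def zf (n : ℕ) (x : ZMod n) : ℂ :=
  Complex.exp (2 * Real.pi * Complex.I / n) ^ (x.val : ℤ)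

lemma zeta_pow_n (n : ℕ) (h : 0 < n) :
    Complex.exp (2 * Real.pi * Complex.I / n) ^ (n : ℕ) = 1 := by
  rw [← Complex.exp_nat_mul, Complex.exp_eq_one_iff]
  refine ⟨1, ?_⟩
  have hn : (n : ℂ) ≠ 0 := Nat.cast_ne_zero.mpr h.ne'
  field_simp
  simp

lemma zf_int (n : ℕ) [NeZero n] (a : ℤ) :
    Complex.exp (2 * Real.pi * Complex.I / n) ^ a = zf n (a : ZMod n) := by
  have hpos : 0 < n := Nat.pos_of_ne_zero (NeZero.ne n)
  set ζ := Complex.exp (2 * Real.pi * Complex.I / n) with hζ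
  have hζ0 : ζ ≠ 0 := Complex.exp_ne_zero _
  have hdvd : (n : ℤ) ∣ a - ((a : ZMod n).val : ℤ) := by
    rw [← ZMod.intCast_zmod_eq_zero_iff_dvd]
    push_cast
    simp [ZMod.cast_id]
  obtain ⟨q, hq⟩ := hdvd
  have ha : a = ((a : ZMod n).val : ℤ) + n * q := by linarith
  show ζ ^ a = ζ ^ (((a : ZMod n).val : ℕ) : ℤ)
  conv_lhs => rw [ha]
  rw [zpow_add₀ hζ0, zpow_mul, zpow_natCast, zpow_natCast, zeta_pow_n n hpos, one_zpow, mul_one]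

lemma zf_add (n : ℕ) [NeZero n] (x y : ZMod n) : zf n (x + y) = zf n x * zf n y := by
  have hζ0 : Complex.exp (2 * Real.pi * Complex.I / n) ≠ 0 := Complex.exp_ne_zero _
  have h : zf n x * zf n y
      = Complex.exp (2 * Real.pi * Complex.I / n) ^ ((x.val : ℤ) + (y.val : ℤ)) :=
    (zpow_add₀ hζ0 _ _).symm
  rw [h, zf_int]
  congr 1
  push_cast
  simp [ZMod.cast_id]

lemma zf_zero (n : ℕ) [NeZero n] : zf n 0 = 1 := by
  simp [zf, ZMod.val_zero]

lemma Gpart_eq (n ν k s M : ℕ) [NeZero n] :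
    Gpart n ν k s M = ∑ t ∈ Finset.range (2 ^ ν / M),
      (zf n ((3 : ZMod n) ^ (k - 1) * 2 ^ (s - 1) * ((2 : ZMod n) ^ M) ^ t) +
       zf n (-((3 : ZMod n) ^ (k - 1) * 2 ^ (s - 1) * ((2 : ZMod n) ^ M) ^ t))) := by
  unfold Gpart
  refine Finset.sum_congr rfl fun t _ => ?_
  have h1 := zf_int n ((3 ^ (k - 1) * 2 ^ (s - 1) * 2 ^ (M * t) : ℕ) : ℤ)
  have h2 := zf_int n (-((3 ^ (k - 1) * 2 ^ (s - 1) * 2 ^ (M * t) : ℕ) : ℤ))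
  rw [h1, h2]
  have hc : (((3 ^ (k - 1) * 2 ^ (s - 1) * 2 ^ (M * t) : ℕ) : ℤ) : ZMod n)
      = (3 : ZMod n) ^ (k - 1) * 2 ^ (s - 1) * ((2 : ZMod n) ^ M) ^ t := by
    push_cast
    rw [pow_mul]
  rw [hc]
  congr 1
  rw [Int.cast_neg, hc]


section GT
variable {n ν ng : ℕ}

lemma two_pow_big (ν : ℕ) : ν + 1 ≤ 2 ^ ν := Nat.lt_two_pow_self

lemma units_two_pow_eq_neg_one [Fact n.Prime] (hn : n = 2 ^ 2 ^ ν + 1) :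
    (2 : ZMod n) ^ 2 ^ ν = -1 := by
  have h1 : ((2 ^ 2 ^ ν + 1 : ℕ) : ZMod n) = 0 := by
    rw [← hn, ZMod.natCast_self]
  push_cast at h1
  linear_combination h1

lemma order_u2 [Fact n.Prime] (hn : n = 2 ^ 2 ^ ν + 1) (hν : 2 ≤ ν)
    (u2 : (ZMod n)ˣ) (h2 : (u2 : ZMod n) = 2) : orderOf u2 = 2 ^ (ν + 1) := by
  have hbig : (17 : ℕ) ≤ n := by
    rw [hn]
    calc (17:ℕ) ≤ 2 ^ 2 ^ 2 + 1 := by norm_num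
    _ ≤ 2 ^ 2 ^ ν + 1 := by
          have : (2:ℕ) ^ 2 ≤ 2 ^ ν := Nat.pow_le_pow_right (by norm_num) hν
          have := Nat.pow_le_pow_right (show 1 ≤ 2 by norm_num) this
          omega
  have hne : (-1 : ZMod n) ≠ 1 := by
    intro h
    have h2 : ((2 : ℕ) : ZMod n) = 0 := by push_cast; linear_combination -h
    rw [ZMod.natCast_eq_zero_iff] at h2
    have := Nat.le_of_dvd (by norm_num) h2
    omega
  have key : (2 : ZMod n) ^ 2 ^ ν = -1 := units_two_pow_eq_neg_one hn
  have hnot : ¬ u2 ^ 2 ^ ν = 1 := by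
    intro h
    apply hne
    have := congrArg (Units.val) h
    push_cast [h2] at this
    rw [← key, this]
  have hfin : u2 ^ 2 ^ (ν + 1) = 1 := by
    ext
    push_cast [h2]
    rw [pow_succ, pow_mul, key]
    ring
  exact orderOf_eq_prime_pow hnot hfin

lemma units_surj [Fact n.Prime] (hn : n = 2 ^ 2 ^ ν + 1) (hν : 2 ≤ ν)
    (hng : ng = 2 ^ (2 ^ ν - (ν + 1)))
    (u2 u3 : (ZMod n)ˣ) (h2 : (u2 : ZMod n) = 2) (h3 : (u3 : ZMod n) = 3)
    (hgen : Subgroup.closure {u : (ZMod n)ˣ | (u : ZMod n) = 2 ∨ (u : ZMod n) = 3} = ⊤) :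
    ∀ x : (ZMod n)ˣ, ∃ j < ng, ∃ i < 2 ^ (ν + 1), u3 ^ j * u2 ^ i = x := by
  have hord : orderOf u2 = 2 ^ (ν + 1) := order_u2 hn hν u2 h2
  have hordpos : 0 < orderOf u2 := by rw [hord]; positivity
  have hcard : Nat.card (ZMod n)ˣ = 2 ^ 2 ^ ν := by
    rw [Nat.card_eq_fintype_card, ZMod.card_units, hn]
    simp
  have hngpos : 0 < ng := by rw [hng]; positivity
  -- the subgroup generated by 2
  set H := Subgroup.zpowers u2 with hH
  have hcardH : Nat.card H = 2 ^ (ν + 1) := by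
    rw [Nat.card_zpowers, hord]
  have hcardQ : Nat.card ((ZMod n)ˣ ⧸ H) = ng := by
    have := Subgroup.card_eq_card_quotient_mul_card_subgroup H
    rw [hcard, hcardH] at this
    rw [hng]
    have hb := two_pow_big ν
    have h2 : (2:ℕ) ^ 2 ^ ν = 2 ^ (2 ^ ν - (ν+1)) * 2 ^ (ν+1) := by
      rw [← pow_add]
      congr 1
      omega
    rw [h2] at this
    exact (Nat.eq_of_mul_eq_mul_right (by positivity) this.symm)
  have h3ng : u3 ^ ng ∈ H := by
    rw [← QuotientGroup.eq_one_iff]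
    have : ((u3 : (ZMod n)ˣ ⧸ H)) ^ ng = 1 := by
      rw [← hcardQ]
      exact pow_card_eq_one'
    simpa using this
  obtain ⟨i0, hi0⟩ := Subgroup.mem_zpowers_iff.mp h3ng
  -- turn i0 into a natural exponent
  have hzn : ∀ (g : (ZMod n)ˣ) (z : ℤ), 0 < orderOf g → ∃ e : ℕ, g ^ z = g ^ e := by
    intro g z hg
    refine ⟨(z % (orderOf g : ℤ)).toNat, ?_⟩
    rw [← zpow_natCast, Int.toNat_of_nonneg (Int.emod_nonneg _ (by exact_mod_cast hg.ne')),
      zpow_mod_orderOf]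
  obtain ⟨e0, he0⟩ := hzn u2 i0 hordpos
  intro x
  -- x is a word in u2, u3
  have hx : x ∈ Subgroup.closure {u : (ZMod n)ˣ | (u : ZMod n) = 2 ∨ (u : ZMod n) = 3} := by
    rw [hgen]; trivial
  have hset : {u : (ZMod n)ˣ | (u : ZMod n) = 2 ∨ (u : ZMod n) = 3} = {u2, u3} := by
    ext u
    simp only [Set.mem_setOf_eq, Set.mem_insert_iff, Set.mem_singleton_iff]
    constructor
    · rintro (h | h)
      · left; exact Units.ext (by rw [h, h2])
      · right; exact Units.ext (by rw [h, h3])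
    · rintro (rfl | rfl)
      · left; exact h2
      · right; exact h3
  rw [hset, Subgroup.mem_closure_pair] at hx
  obtain ⟨a, b, hab⟩ := hx
  have hord3pos : 0 < orderOf u3 := by
    have : IsOfFinOrder u3 := isOfFinOrder_of_finite u3
    exact this.orderOf_pos
  obtain ⟨a', ha'⟩ := hzn u2 a hordpos
  obtain ⟨b', hb'⟩ := hzn u3 b hord3pos
  -- reduce b' mod ng
  obtain ⟨q, r, hr, hqr⟩ : ∃ q r, r < ng ∧ b' = ng * q + r :=
    ⟨b' / ng, b' % ng, Nat.mod_lt _ hngpos, (Nat.div_add_mod b' ng).symm⟩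
  have hu3b : u3 ^ b' = u2 ^ (e0 * q) * u3 ^ r := by
    rw [hqr, pow_add, pow_mul, ← hi0, he0, ← pow_mul]
  have hx2 : u3 ^ r * u2 ^ (a' + e0 * q) = x := by
    rw [← hab, ha', hb', hu3b, pow_add]
    simp [mul_comm, mul_left_comm, mul_assoc]
  refine ⟨r, hr, (a' + e0 * q) % 2 ^ (ν + 1), Nat.mod_lt _ (by positivity), ?_⟩
  rw [← hord, pow_mod_orderOf, hx2]
end GT

section GT2
variable {n ν ng : ℕ}

lemma units_inj [Fact n.Prime] (hn : n = 2 ^ 2 ^ ν + 1) (hν : 2 ≤ ν)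
    (hng : ng = 2 ^ (2 ^ ν - (ν + 1)))
    (u2 u3 : (ZMod n)ˣ) (h2 : (u2 : ZMod n) = 2) (h3 : (u3 : ZMod n) = 3)
    (hgen : Subgroup.closure {u : (ZMod n)ˣ | (u : ZMod n) = 2 ∨ (u : ZMod n) = 3} = ⊤) :
    ∀ j < ng, ∀ j' < ng, ∀ i < 2 ^ (ν + 1), ∀ i' < 2 ^ (ν + 1),
      u3 ^ j * u2 ^ i = u3 ^ j' * u2 ^ i' → j = j' ∧ i = i' := by
  have hsurj := units_surj hn hν hng u2 u3 h2 h3 hgen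
  set F : Fin ng × Fin (2 ^ (ν + 1)) → (ZMod n)ˣ :=
    fun p => u3 ^ (p.1 : ℕ) * u2 ^ (p.2 : ℕ) with hF
  have hFsurj : Function.Surjective F := by
    intro x
    obtain ⟨j, hj, i, hi, h⟩ := hsurj x
    exact ⟨(⟨j, hj⟩, ⟨i, hi⟩), h⟩
  have hcards : Fintype.card (Fin ng × Fin (2 ^ (ν + 1))) = Fintype.card (ZMod n)ˣ := by
    rw [ZMod.card_units, hn]
    have hb := two_pow_big ν
    simp only [Fintype.card_prod, Fintype.card_fin, hng]
    rw [← pow_add]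
    congr 1
    omega
  have hFbij : Function.Bijective F :=
    (Fintype.bijective_iff_surjective_and_card F).mpr ⟨hFsurj, hcards⟩
  intro j hj j' hj' i hi i' hi' h
  have := hFbij.injective (a₁ := (⟨j, hj⟩, ⟨i, hi⟩)) (a₂ := (⟨j', hj'⟩, ⟨i', hi'⟩)) h
  rw [Prod.ext_iff, Fin.ext_iff, Fin.ext_iff] at this
  exact this

lemma digits3 {P Q : ℕ} (hP : 0 < P) (a u d a' u' d' : ℕ) (ha : a < P) (ha' : a' < P)
    (hu : u < Q) (hu' : u' < Q)
    (h : a + P * (u + Q * d) = a' + P * (u' + Q * d')) : a = a' ∧ u = u' ∧ d = d' := by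
  have hQ : 0 < Q := lt_of_le_of_lt (Nat.zero_le u) hu
  have h1 : a = a' := by
    have e1 : (a + P * (u + Q * d)) % P = a := by
      rw [Nat.add_mul_mod_self_left, Nat.mod_eq_of_lt ha]
    have e2 : (a' + P * (u' + Q * d')) % P = a' := by
      rw [Nat.add_mul_mod_self_left, Nat.mod_eq_of_lt ha']
    rw [← e1, h, e2]
  subst h1
  have h2 : u + Q * d = u' + Q * d' :=
    Nat.eq_of_mul_eq_mul_left hP (Nat.add_left_cancel h)
  have h3 : u = u' := by
    have e1 : (u + Q * d) % Q = u := by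
      rw [Nat.add_mul_mod_self_left, Nat.mod_eq_of_lt hu]
    have e2 : (u' + Q * d') % Q = u' := by
      rw [Nat.add_mul_mod_self_left, Nat.mod_eq_of_lt hu']
    rw [← e1, h2, e2]
  subst h3
  exact ⟨rfl, rfl, Nat.eq_of_mul_eq_mul_left hQ (Nat.add_left_cancel h2)⟩

end GT2

section GT3
variable {n ν ng : ℕ}

lemma n_big (hn : n = 2 ^ 2 ^ ν + 1) (hν : 2 ≤ ν) : 17 ≤ n := by
  rw [hn]
  calc (17:ℕ) ≤ 2 ^ 2 ^ 2 + 1 := by norm_num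
  _ ≤ 2 ^ 2 ^ ν + 1 := by
        have h1 : (2:ℕ) ^ 2 ≤ 2 ^ ν := Nat.pow_le_pow_right (by norm_num) hν
        have := Nat.pow_le_pow_right (show 1 ≤ 2 by norm_num) h1
        omega

lemma exists_u23 [Fact n.Prime] (hn : n = 2 ^ 2 ^ ν + 1) (hν : 2 ≤ ν) :
    ∃ u2 u3 : (ZMod n)ˣ, (u2 : ZMod n) = 2 ∧ (u3 : ZMod n) = 3 := by
  have hbig : 17 ≤ n := n_big hn hν
  have h2 : (2 : ZMod n) ≠ 0 := by
    intro h
    have h' : ((2 : ℕ) : ZMod n) = 0 := by push_cast; exact h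
    rw [ZMod.natCast_eq_zero_iff] at h'
    have := Nat.le_of_dvd (by norm_num) h'
    omega
  have h3 : (3 : ZMod n) ≠ 0 := by
    intro h
    have h' : ((3 : ℕ) : ZMod n) = 0 := by push_cast; exact h
    rw [ZMod.natCast_eq_zero_iff] at h'
    have := Nat.le_of_dvd (by norm_num) h'
    omega
  exact ⟨(isUnit_iff_ne_zero.mpr h2).unit, (isUnit_iff_ne_zero.mpr h3).unit,
    (isUnit_iff_ne_zero.mpr h2).unit_spec, (isUnit_iff_ne_zero.mpr h3).unit_spec⟩

/-- The representation map used in the final regrouping. -/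
def psiD (n : ℕ) (m : ℕ) (p : Bool × ℕ × ℕ × ℕ) : ZMod n :=
  (if p.1 then (1 : ZMod n) else -1) * 3 ^ (p.2.1 - 1) * 2 ^ ((p.2.2.1 - 1) + 2 ^ m * p.2.2.2)

lemma psi_main [Fact n.Prime] (hn : n = 2 ^ 2 ^ ν + 1) (hν : 2 ≤ ν)
    (hng : ng = 2 ^ (2 ^ ν - (ν + 1)))
    (hgen : Subgroup.closure {u : (ZMod n)ˣ | (u : ZMod n) = 2 ∨ (u : ZMod n) = 3} = ⊤)
    {m : ℕ} (hm : m + 1 ≤ ν) :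
    Set.InjOn (psiD n m)
      ↑((Finset.univ ×ˢ Finset.Icc 1 ng ×ˢ Finset.Icc 1 (2 ^ m) ×ˢ Finset.range (2 ^ (ν - m)))
        : Finset (Bool × ℕ × ℕ × ℕ))
    ∧ ∀ p : Bool × ℕ × ℕ × ℕ, psiD n m p ≠ 0 := by
  obtain ⟨u2, u3, h2, h3⟩ := exists_u23 hn hν
  have hkey : (2 : ZMod n) ^ 2 ^ ν = -1 := units_two_pow_eq_neg_one hn
  have hval : ∀ (b : Bool) (j e : ℕ),
      (if b then (1 : ZMod n) else -1) * 3 ^ j * 2 ^ e =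
        ((u3 ^ j * u2 ^ (e + if b then 0 else 2 ^ ν) : (ZMod n)ˣ) : ZMod n) := by
    intro b j e
    push_cast [h2, h3]
    cases b <;> simp <;> rw [pow_add, hkey] <;> ring
  have hAB : (2:ℕ) ^ m * 2 ^ (ν - m) = 2 ^ ν := by
    rw [← pow_add]; congr 1; omega
  constructor
  · intro p hp q hq heq
    obtain ⟨b, j, l, u⟩ := p
    obtain ⟨b', j', l', u'⟩ := q
    simp only [Finset.coe_product, Finset.mem_coe, Finset.mem_product, Finset.mem_Icc,
      Finset.mem_range, Finset.mem_univ, true_and, Set.mem_prod, Finset.coe_Icc,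
      Set.mem_Icc, Finset.coe_range, Set.mem_Iio, Set.mem_univ] at hp hq
    obtain ⟨⟨hj1, hj2⟩, ⟨hl1, hl2⟩, hu⟩ := hp
    obtain ⟨⟨hj1', hj2'⟩, ⟨hl1', hl2'⟩, hu'⟩ := hq
    unfold psiD at heq
    simp only at heq
    rw [hval, hval] at heq
    have hueq := Units.ext heq
    -- bounds for units_inj
    have hEb : ∀ l₀ u₀ : ℕ, l₀ - 1 < 2 ^ m → u₀ < 2 ^ (ν - m) →
        (l₀ - 1) + 2 ^ m * u₀ < 2 ^ ν := by
      intro l₀ u₀ hl hu₀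
      calc (l₀ - 1) + 2 ^ m * u₀ < 2 ^ m + 2 ^ m * u₀ := by omega
      _ = 2 ^ m * (u₀ + 1) := by ring
      _ ≤ 2 ^ m * 2 ^ (ν - m) := Nat.mul_le_mul_left _ hu₀
      _ = 2 ^ ν := hAB
    have hb1 : (l - 1) + 2 ^ m * u < 2 ^ ν := hEb l u (by omega) hu
    have hb1' : (l' - 1) + 2 ^ m * u' < 2 ^ ν := hEb l' u' (by omega) hu'
    have hI : (l - 1) + 2 ^ m * u + (if b then 0 else 2 ^ ν) < 2 ^ (ν + 1) := by
      have : (2:ℕ) ^ (ν + 1) = 2 ^ ν + 2 ^ ν := by ring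
      cases b <;> simp <;> omega
    have hI' : (l' - 1) + 2 ^ m * u' + (if b' then 0 else 2 ^ ν) < 2 ^ (ν + 1) := by
      have : (2:ℕ) ^ (ν + 1) = 2 ^ ν + 2 ^ ν := by ring
      cases b' <;> simp <;> omega
    have hinj := units_inj hn hν hng u2 u3 h2 h3 hgen (j - 1) (by omega) (j' - 1) (by omega)
      _ hI _ hI' hueq
    obtain ⟨hjj, hEe⟩ := hinj
    -- decode the exponent
    have hd : ((l - 1) + 2 ^ m * (u + 2 ^ (ν - m) * (if b then 0 else 1))) =
        ((l' - 1) + 2 ^ m * (u' + 2 ^ (ν - m) * (if b' then 0 else 1))) := by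
      have e1 : ∀ (bb : Bool) (l₀ u₀ : ℕ),
          (l₀ - 1) + 2 ^ m * (u₀ + 2 ^ (ν - m) * (if bb then 0 else 1)) =
          (l₀ - 1) + 2 ^ m * u₀ + (if bb then 0 else 2 ^ ν) := by
        intro bb l₀ u₀
        cases bb <;> simp [Nat.mul_add, ← Nat.mul_assoc, hAB] <;> ring
      rw [e1, e1]
      exact hEe
    obtain ⟨hll, huu, hbb⟩ := digits3 (pow_pos (by norm_num) m) _ _ _ _ _ _
      (by omega) (by omega) hu hu' hd
    have hb : b = b' := by
      cases b <;> cases b' <;> simp_all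
    have hjeq : j = j' := by omega
    have hleq : l = l' := by omega
    simp [Prod.ext_iff, hb, hjeq, hleq, huu]
  · intro p
    obtain ⟨b, j, l, u⟩ := p
    unfold psiD
    simp only
    rw [hval]
    exact Units.ne_zero _

end GT3

section CNT
variable {n : ℕ}

/-- value of an index -/
def vIdx (n : ℕ) (A gs w : ZMod n) (p : (ℕ × ℕ) × (Bool × Bool)) : ZMod n :=
  (if p.2.1 then 1 else -1) * (A * w ^ p.1.1) + (if p.2.2 then 1 else -1) * (A * gs * w ^ p.1.2)

/-- the counting function -/
noncomputable def cntS (n : ℕ) (A gs w : ZMod n) (R : ℕ) (x : ZMod n) : ℕ :=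
  (((Finset.range R ×ˢ Finset.range R) ×ˢ (Finset.univ : Finset (Bool × Bool))).filter
    (fun p => vIdx n A gs w p = x)).card

def stepF (R : ℕ) (p : (ℕ × ℕ) × (Bool × Bool)) : (ℕ × ℕ) × (Bool × Bool) :=
  (((p.1.2 + 1) % R, p.1.1), ((if p.1.2 + 1 = R then !p.2.2 else p.2.2), p.2.1))

def stepFinv (R : ℕ) (q : (ℕ × ℕ) × (Bool × Bool)) : (ℕ × ℕ) × (Bool × Bool) :=
  ((q.1.2, if q.1.1 = 0 then R - 1 else q.1.1 - 1),
    (q.2.2, if q.1.1 = 0 then !q.2.1 else q.2.1))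

lemma cnt_neg (A gs w : ZMod n) (R : ℕ) (x : ZMod n) :
    cntS n A gs w R (-x) = cntS n A gs w R x := by
  unfold cntS
  apply Finset.card_nbij' (i := fun p => (p.1, (!p.2.1, !p.2.2)))
    (j := fun p => (p.1, (!p.2.1, !p.2.2)))
  · intro p hp
    simp only [Finset.mem_coe, Finset.mem_filter, Finset.mem_product, Finset.mem_univ, and_true] at hp ⊢
    refine ⟨hp.1, ?_⟩
    have := hp.2
    unfold vIdx at this ⊢
    obtain ⟨⟨t, t'⟩, b, b'⟩ := p
    cases b <;> cases b' <;> simp_all <;> linear_combination -this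
  · intro p hp
    simp only [Finset.mem_coe, Finset.mem_filter, Finset.mem_product, Finset.mem_univ, and_true] at hp ⊢
    refine ⟨hp.1, ?_⟩
    have := hp.2
    unfold vIdx at this ⊢
    obtain ⟨⟨t, t'⟩, b, b'⟩ := p
    cases b <;> cases b' <;> simp_all <;> linear_combination -this
  · intro p _; simp
  · intro p _; simp

lemma stepF_val (A gs w : ZMod n) (R : ℕ) (hRpos : 0 < R) (hw : w = gs * gs)
    (hwR : w ^ R = -1) :
    ∀ p ∈ (Finset.range R ×ˢ Finset.range R) ×ˢ (Finset.univ : Finset (Bool × Bool)),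
      vIdx n A gs w (stepF R p) = gs * vIdx n A gs w p := by
  rintro ⟨⟨t, t'⟩, b, b'⟩ hp
  simp only [Finset.mem_product, Finset.mem_range, Finset.mem_univ, and_true] at hp
  obtain ⟨ht, ht'⟩ := hp
  unfold vIdx stepF
  simp only
  by_cases hcase : t' + 1 = R
  · have h0 : (t' + 1) % R = 0 := by rw [hcase, Nat.mod_self]
    rw [if_pos hcase, h0]
    have e1 : gs * (A * gs * w ^ t') = -A := by
      have h1 : gs * (A * gs * w ^ t') = A * w ^ (t' + 1) := by rw [pow_succ, hw]; ring
      rw [h1, hcase, hwR]; ring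
    cases b' <;> cases b <;> simp <;>
      first
        | linear_combination e1
        | linear_combination -e1
  · have h0 : (t' + 1) % R = t' + 1 := Nat.mod_eq_of_lt (by omega)
    rw [if_neg hcase, h0]
    have e2 : gs * (A * gs * w ^ t') = A * w ^ (t' + 1) := by rw [pow_succ, hw]; ring
    cases b' <;> cases b <;> simp <;>
      first
        | linear_combination e2
        | linear_combination -e2

lemma stepF_mem (R : ℕ) (hRpos : 0 < R) :
    ∀ p ∈ (Finset.range R ×ˢ Finset.range R) ×ˢ (Finset.univ : Finset (Bool × Bool)),
      stepF R p ∈ (Finset.range R ×ˢ Finset.range R) ×ˢ (Finset.univ : Finset (Bool × Bool)) := by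
  rintro ⟨⟨t, t'⟩, b, b'⟩ hp
  simp only [Finset.mem_product, Finset.mem_range, Finset.mem_univ, and_true, stepF] at hp ⊢
  exact ⟨Nat.mod_lt _ hRpos, hp.1⟩

lemma stepFinv_mem (R : ℕ) (hRpos : 0 < R) :
    ∀ p ∈ (Finset.range R ×ˢ Finset.range R) ×ˢ (Finset.univ : Finset (Bool × Bool)),
      stepFinv R p ∈ (Finset.range R ×ˢ Finset.range R) ×ˢ (Finset.univ : Finset (Bool × Bool)) := by
  rintro ⟨⟨t, t'⟩, b, b'⟩ hp
  simp only [Finset.mem_product, Finset.mem_range, Finset.mem_univ, and_true, stepFinv] at hp ⊢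
  refine ⟨hp.2, ?_⟩
  by_cases h : t = 0 <;> simp [h] <;> omega

lemma stepF_left_inv (R : ℕ) :
    ∀ p ∈ (Finset.range R ×ˢ Finset.range R) ×ˢ (Finset.univ : Finset (Bool × Bool)),
      stepFinv R (stepF R p) = p := by
  rintro ⟨⟨t, t'⟩, b, b'⟩ hp
  simp only [Finset.mem_product, Finset.mem_range, Finset.mem_univ, and_true] at hp
  obtain ⟨ht, ht'⟩ := hp
  unfold stepF stepFinv
  by_cases hcase : t' + 1 = R
  · have h0 : (t' + 1) % R = 0 := by rw [hcase, Nat.mod_self]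
    simp [h0, hcase]
    omega
  · have h0 : (t' + 1) % R = t' + 1 := Nat.mod_eq_of_lt (by omega)
    simp [h0, hcase]

lemma stepF_right_inv (R : ℕ) :
    ∀ p ∈ (Finset.range R ×ˢ Finset.range R) ×ˢ (Finset.univ : Finset (Bool × Bool)),
      stepF R (stepFinv R p) = p := by
  rintro ⟨⟨t, t'⟩, b, b'⟩ hp
  simp only [Finset.mem_product, Finset.mem_range, Finset.mem_univ, and_true] at hp
  obtain ⟨ht, ht'⟩ := hp
  unfold stepF stepFinv
  by_cases hcase : t = 0
  · have h1 : R - 1 + 1 = R := by omega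
    simp [hcase, h1, Nat.mod_self]
  · have h1 : t - 1 + 1 = t := by omega
    have h2 : t % R = t := Nat.mod_eq_of_lt ht
    simp [hcase, h1, h2]
    omega

lemma cnt_gs [Fact n.Prime] (A gs w : ZMod n) (R : ℕ) (hRpos : 0 < R) (hw : w = gs * gs)
    (hwR : w ^ R = -1) (hgs : gs ≠ 0) (x : ZMod n) :
    cntS n A gs w R (gs * x) = cntS n A gs w R x := by
  unfold cntS
  symm
  apply Finset.card_nbij' (i := stepF R) (j := stepFinv R)
  · intro p hp
    rw [Finset.mem_coe, Finset.mem_filter] at hp ⊢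
    refine ⟨stepF_mem R hRpos p hp.1, ?_⟩
    rw [stepF_val A gs w R hRpos hw hwR p hp.1, hp.2]
  · intro q hq
    rw [Finset.mem_coe, Finset.mem_filter] at hq ⊢
    have hmem := stepFinv_mem R hRpos q hq.1
    refine ⟨hmem, ?_⟩
    have h1 : vIdx n A gs w (stepF R (stepFinv R q)) = gs * vIdx n A gs w (stepFinv R q) :=
      stepF_val A gs w R hRpos hw hwR _ hmem
    rw [stepF_right_inv R q hq.1, hq.2] at h1
    exact (mul_left_cancel₀ hgs h1.symm)
  · intro p hp
    exact stepF_left_inv R p (Finset.mem_filter.mp hp).1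
  · intro q hq
    exact stepF_right_inv R q (Finset.mem_filter.mp hq).1

lemma cnt_orbit [Fact n.Prime] (A gs w : ZMod n) (R : ℕ) (hRpos : 0 < R) (hw : w = gs * gs)
    (hwR : w ^ R = -1) (hgs : gs ≠ 0) :
    ∀ (u : ℕ) (b : Bool) (y : ZMod n),
      cntS n A gs w R ((if b then 1 else -1) * gs ^ u * y) = cntS n A gs w R y := by
  intro u
  induction u with
  | zero =>
    intro b y
    cases b
    · simp only [pow_zero, Bool.false_eq_true, if_false]
      rw [show (-1 : ZMod n) * 1 * y = -y by ring]
      exact cnt_neg A gs w R y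
    · simp
  | succ u ih =>
    intro b y
    rw [show (if b then (1:ZMod n) else -1) * gs ^ (u + 1) * y
        = gs * ((if b then (1:ZMod n) else -1) * gs ^ u * y) by rw [pow_succ]; ring]
    rw [cnt_gs A gs w R hRpos hw hwR hgs, ih]

section EXP
variable {n : ℕ}

lemma step_sum [NeZero n] (A gs w : ZMod n) (R : ℕ) :
    (∑ t ∈ Finset.range R, (zf n (A * w ^ t) + zf n (-(A * w ^ t)))) *
      (∑ t ∈ Finset.range R, (zf n (A * gs * w ^ t) + zf n (-(A * gs * w ^ t)))) =
    ∑ p ∈ (Finset.range R ×ˢ Finset.range R) ×ˢ (Finset.univ : Finset (Bool × Bool)),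
      zf n (vIdx n A gs w p) := by
  rw [Finset.sum_mul_sum, Finset.sum_product, Finset.sum_product]
  refine Finset.sum_congr rfl fun t _ => Finset.sum_congr rfl fun t' _ => ?_
  rw [Fintype.sum_prod_type, Fintype.sum_bool]
  rw [Fintype.sum_bool, Fintype.sum_bool]
  unfold vIdx
  simp only [Bool.false_eq_true, if_true, if_false, one_mul, neg_one_mul, mul_neg_one]
  simp only [zf_add]
  ring

lemma fiber_sum [NeZero n] (A gs w : ZMod n) (R : ℕ) :
    ∑ p ∈ (Finset.range R ×ˢ Finset.range R) ×ˢ (Finset.univ : Finset (Bool × Bool)),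
      zf n (vIdx n A gs w p)
    = ∑ x : ZMod n, (cntS n A gs w R x : ℂ) * zf n x := by
  rw [← Finset.sum_fiberwise' _ (vIdx n A gs w) (zf n)]
  refine Finset.sum_congr rfl fun x _ => ?_
  rw [Finset.sum_const, nsmul_eq_mul]
  rfl

end EXP
/-- For a Fermat prime `n = 2 ^ 2 ^ ν + 1` (`ν ≥ 2`) such that `2` and `3`
generate `(ZMod n)ˣ`, with `ng = 2 ^ (2 ^ ν - (ν + 1))`: for every `m ≥ 0` with
`2 ^ (m + 1) ≤ 2 ^ ν`, every `1 ≤ k ≤ ng` and every `1 ≤ s ≤ 2 ^ m`, there exist an integer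
`c` and integers `μ j l` such that
`G_k(s, 2^(m+1)) * G_k(s + 2^m, 2^(m+1)) = c + ∑ j ∑ l, μ j l * G_j(l, 2^m)`. -/
theorem stmt8 (ν n : ℕ) (hν : 2 ≤ ν) (hn : n = 2 ^ (2 ^ ν) + 1) (hp : n.Prime)
    (hgen : Subgroup.closure {u : (ZMod n)ˣ | (u : ZMod n) = 2 ∨ (u : ZMod n) = 3} = ⊤)
    (ng : ℕ) (hng : ng = 2 ^ (2 ^ ν - (ν + 1))) :
    ∀ m : ℕ, 2 ^ (m + 1) ≤ 2 ^ ν → ∀ k : ℕ, 1 ≤ k → k ≤ ng → ∀ s : ℕ, 1 ≤ s → s ≤ 2 ^ m →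
      ∃ (c : ℤ) (μ : ℕ → ℕ → ℤ),
        Gpart n ν k s (2 ^ (m + 1)) * Gpart n ν k (s + 2 ^ m) (2 ^ (m + 1)) =
          (c : ℂ) + ∑ j ∈ Finset.Icc 1 ng, ∑ l ∈ Finset.Icc 1 (2 ^ m),
            (μ j l : ℂ) * Gpart n ν j l (2 ^ m) := by
  intro m hm k hk1 hk2 s hs1 hs2
  haveI : Fact n.Prime := ⟨hp⟩
  haveI : NeZero n := ⟨hp.pos.ne'⟩
  have hmν : m + 1 ≤ ν := by
    by_contra h
    push_neg at h
    have := Nat.pow_lt_pow_right (show 1 < 2 by norm_num) (show ν < m + 1 by omega)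
    omega
  have hbig := two_pow_big ν
  have hnbig : 17 ≤ n := n_big hn hν
  have hR : 2 ^ ν / 2 ^ (m + 1) = 2 ^ (ν - (m + 1)) := Nat.pow_div hmν (by norm_num)
  have hRm : 2 ^ ν / 2 ^ m = 2 ^ (ν - m) := Nat.pow_div (by omega) (by norm_num)
  have hRpos : 0 < 2 ^ (ν - (m + 1)) := by positivity
  have hkey : (2 : ZMod n) ^ 2 ^ ν = -1 := units_two_pow_eq_neg_one hn
  have h2ne : (2 : ZMod n) ≠ 0 := by
    intro h
    have h' : ((2 : ℕ) : ZMod n) = 0 := by push_cast; exact h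
    rw [ZMod.natCast_eq_zero_iff] at h'
    have := Nat.le_of_dvd (by norm_num) h'
    omega
  have hgsne : ((2 : ZMod n) ^ 2 ^ m) ≠ 0 := pow_ne_zero _ h2ne
  have hwgs : ((2 : ZMod n) ^ 2 ^ (m + 1)) = 2 ^ 2 ^ m * 2 ^ 2 ^ m := by
    rw [← pow_add]
    congr 1
    ring
  have hwR : ((2 : ZMod n) ^ 2 ^ (m + 1)) ^ 2 ^ (ν - (m + 1)) = -1 := by
    rw [← pow_mul, ← hkey]
    congr 1
    rw [← pow_add]
    congr 1
    omega
  -- the two partial periods as sums over explicit values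
  have hG1 : Gpart n ν k s (2 ^ (m + 1))
      = ∑ t ∈ Finset.range (2 ^ (ν - (m + 1))),
        (zf n ((3 : ZMod n) ^ (k - 1) * 2 ^ (s - 1) * ((2 : ZMod n) ^ 2 ^ (m + 1)) ^ t) +
         zf n (-((3 : ZMod n) ^ (k - 1) * 2 ^ (s - 1) * ((2 : ZMod n) ^ 2 ^ (m + 1)) ^ t))) := by
    rw [Gpart_eq, hR]
  have hA2 : (3 : ZMod n) ^ (k - 1) * 2 ^ (s + 2 ^ m - 1)
      = (3 : ZMod n) ^ (k - 1) * 2 ^ (s - 1) * 2 ^ 2 ^ m := by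
    have hs' : s + 2 ^ m - 1 = (s - 1) + 2 ^ m := by omega
    rw [hs', pow_add]
    ring
  have hG2 : Gpart n ν k (s + 2 ^ m) (2 ^ (m + 1))
      = ∑ t ∈ Finset.range (2 ^ (ν - (m + 1))),
        (zf n ((3 : ZMod n) ^ (k - 1) * 2 ^ (s - 1) * 2 ^ 2 ^ m *
            ((2 : ZMod n) ^ 2 ^ (m + 1)) ^ t) +
         zf n (-((3 : ZMod n) ^ (k - 1) * 2 ^ (s - 1) * 2 ^ 2 ^ m *
            ((2 : ZMod n) ^ 2 ^ (m + 1)) ^ t))) := by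
    rw [Gpart_eq, hR]
    refine Finset.sum_congr rfl fun t _ => ?_
    rw [hA2]
  -- injectivity data
  obtain ⟨hinj, hne0⟩ := psi_main (n := n) (ν := ν) (ng := ng) hn hν hng hgen hmν
  refine ⟨(cntS n ((3 : ZMod n) ^ (k - 1) * 2 ^ (s - 1)) (2 ^ 2 ^ m) (2 ^ 2 ^ (m + 1))
      (2 ^ (ν - (m + 1))) 0 : ℤ),
    fun j l => (cntS n ((3 : ZMod n) ^ (k - 1) * 2 ^ (s - 1)) (2 ^ 2 ^ m) (2 ^ 2 ^ (m + 1))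
      (2 ^ (ν - (m + 1))) ((3 : ZMod n) ^ (j - 1) * 2 ^ (l - 1)) : ℤ), ?_⟩
  rw [hG1, hG2, step_sum, fiber_sum,
    ← Finset.add_sum_erase _ _ (Finset.mem_univ (0 : ZMod n)), zf_zero, mul_one]
  simp only [Int.cast_natCast]
  congr 1
  -- the image of the representation map is all nonzero residues
  have harith : (2 : ℕ) * (2 ^ (2 ^ ν - (ν + 1)) * (2 ^ m * 2 ^ (ν - m))) = 2 ^ 2 ^ ν := by
    rw [← pow_add, ← pow_add, ← pow_succ']
    congr 1
    omega
  have hDcard : ((Finset.univ : Finset Bool) ×ˢ (Finset.Icc 1 ng ×ˢ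
      (Finset.Icc 1 (2 ^ m) ×ˢ Finset.range (2 ^ (ν - m))))).card = n - 1 := by
    rw [Finset.card_product, Finset.card_product, Finset.card_product, Nat.card_Icc,
      Nat.card_Icc, Finset.card_range, Finset.card_univ, Fintype.card_bool, hn, hng]
    simpa using harith
  have himage : ((Finset.univ : Finset Bool) ×ˢ (Finset.Icc 1 ng ×ˢ
      (Finset.Icc 1 (2 ^ m) ×ˢ Finset.range (2 ^ (ν - m))))).image (psiD n m)
      = Finset.univ.erase (0 : ZMod n) := by
    apply Finset.eq_of_subset_of_card_le
    · intro x hx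
      obtain ⟨p, hp, rfl⟩ := Finset.mem_image.mp hx
      exact Finset.mem_erase.mpr ⟨hne0 p, Finset.mem_univ _⟩
    · rw [Finset.card_erase_of_mem (Finset.mem_univ _), Finset.card_univ, ZMod.card,
        Finset.card_image_of_injOn hinj, hDcard]
  rw [← himage,
    Finset.sum_image (fun x hx y hy h => hinj (Finset.mem_coe.mpr hx) (Finset.mem_coe.mpr hy) h)]
  rw [Finset.sum_product]
  simp only [Finset.sum_product]
  rw [Finset.sum_comm]
  refine Finset.sum_congr rfl fun j hj => ?_
  rw [Finset.sum_comm]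
  refine Finset.sum_congr rfl fun l hl => ?_
  -- now a fixed pair (j, l)
  have hcnt : ∀ (b : Bool) (u : ℕ),
      cntS n ((3 : ZMod n) ^ (k - 1) * 2 ^ (s - 1)) (2 ^ 2 ^ m) (2 ^ 2 ^ (m + 1))
        (2 ^ (ν - (m + 1))) (psiD n m (b, j, l, u))
      = cntS n ((3 : ZMod n) ^ (k - 1) * 2 ^ (s - 1)) (2 ^ 2 ^ m) (2 ^ 2 ^ (m + 1))
        (2 ^ (ν - (m + 1))) ((3 : ZMod n) ^ (j - 1) * 2 ^ (l - 1)) := by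
    intro b u
    have horb := cnt_orbit (n := n) ((3 : ZMod n) ^ (k - 1) * 2 ^ (s - 1)) (2 ^ 2 ^ m)
      (2 ^ 2 ^ (m + 1)) (2 ^ (ν - (m + 1))) hRpos hwgs hwR hgsne u b
      ((3 : ZMod n) ^ (j - 1) * 2 ^ (l - 1))
    rw [← horb]
    congr 1
    unfold psiD
    simp only
    cases b
    · simp only [Bool.false_eq_true, if_false]
      rw [pow_add, pow_mul]
      ring
    · simp only [if_true]
      rw [pow_add, pow_mul]
      ring
  have hψt : ∀ u : ℕ, psiD n m (true, j, l, u)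
      = (3 : ZMod n) ^ (j - 1) * 2 ^ (l - 1) * ((2 : ZMod n) ^ 2 ^ m) ^ u := by
    intro u
    unfold psiD
    simp only [if_true]
    rw [pow_add, pow_mul]
    ring
  have hψf : ∀ u : ℕ, psiD n m (false, j, l, u)
      = -((3 : ZMod n) ^ (j - 1) * 2 ^ (l - 1) * ((2 : ZMod n) ^ 2 ^ m) ^ u) := by
    intro u
    unfold psiD
    simp only [Bool.false_eq_true, if_false]
    rw [pow_add, pow_mul]
    ring
  rw [Fintype.sum_bool]
  rw [Gpart_eq, hRm, Finset.mul_sum, ← Finset.sum_add_distrib]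
  refine Finset.sum_congr rfl fun u _ => ?_
  rw [hcnt true u, hcnt false u, hψt u, hψf u]
  push_cast
  ring
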